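/- arXiv:1809.02939 — 6 statements merged into one kernel-verified Lean document; each statement's English description precedes it below -/
import Mathlib

section
/- Let 0 < α ≤ 1 and s be a positive integer with s ≤ n. For any vectors x, x̂ ∈ ℝⁿ satisfying ‖x̂‖₁ − α‖x̂‖₂ ≤ ‖x‖₁ − α‖x‖₂, set h = x̂ − x. Then (i) ‖h_{-max(s)}‖₁ ≤ ‖h_{max(s)}‖₁ + 2‖x_{-max(s)}‖₁ + α‖h‖₂, and (ii) ‖h_{-max(s)}‖₁ − α‖h_{-max(s)}‖₂ ≤ ‖h_{max(s)}‖₁ + 2‖x_{-max(s)}‖₁ + α‖h_{max(s)}‖₂. -/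
open Finset

/-- The ℓ₁ norm of a vector in `ℝⁿ`. -/
noncomputable def l1norm {n : ℕ} (x : Fin n → ℝ) : ℝ := ∑ i, |x i|

/-- The ℓ₂ norm of a vector in `ℝⁿ`. -/
noncomputable def l2norm {n : ℕ} (x : Fin n → ℝ) : ℝ := Real.sqrt (∑ i, (x i) ^ 2)

/-- The restriction `x_S` of a vector `x` to an index set `S` (equal to `x` on `S`, zero
outside `S`). -/
def restr {n : ℕ} (x : Fin n → ℝ) (S : Finset (Fin n)) : Fin n → ℝ :=
  fun i => if i ∈ S then x i else 0

/-- `T` is an index set of the `s` largest-magnitude entries of `x` among the indices in `S`. -/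
def IsMaxIdxOn {n : ℕ} (x : Fin n → ℝ) (s : ℕ) (T S : Finset (Fin n)) : Prop :=
  T ⊆ S ∧ T.card = s ∧ ∀ i ∈ T, ∀ j ∈ S \ T, |x j| ≤ |x i|

/-- `T` is an index set of the `s` largest-magnitude entries of `x`. -/
def IsMaxIdx {n : ℕ} (x : Fin n → ℝ) (s : ℕ) (T : Finset (Fin n)) : Prop :=
  IsMaxIdxOn x s T Finset.univ

/-- A vector is `r`-sparse: it has at most `r` nonzero entries. -/
def Sparse {n : ℕ} (r : ℕ) (v : Fin n → ℝ) : Prop :=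
  ∃ S : Finset (Fin n), S.card ≤ r ∧ ∀ i ∉ S, v i = 0

lemma l2norm_eq_norm {n : ℕ} (x : Fin n → ℝ) :
    l2norm x = ‖(WithLp.equiv 2 (Fin n → ℝ)).symm x‖ := by
  rw [EuclideanSpace.norm_eq, l2norm]
  congr 1
  refine Finset.sum_congr rfl fun i _ => ?_
  rw [Real.norm_eq_abs, sq_abs]
  rfl

lemma l2norm_sub_le {n : ℕ} (x y : Fin n → ℝ) : l2norm x - l2norm y ≤ l2norm (x - y) := by
  rw [l2norm_eq_norm, l2norm_eq_norm, l2norm_eq_norm]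
  exact norm_sub_norm_le _ _

lemma l2norm_add_le {n : ℕ} (x y : Fin n → ℝ) : l2norm (x + y) ≤ l2norm x + l2norm y := by
  rw [l2norm_eq_norm, l2norm_eq_norm, l2norm_eq_norm]
  exact norm_add_le _ _

lemma l1norm_restr {n : ℕ} (x : Fin n → ℝ) (S : Finset (Fin n)) :
    l1norm (restr x S) = ∑ i ∈ S, |x i| := by
  rw [l1norm, ← Finset.sum_add_sum_compl S fun i => |restr x S i|]
  have h1 : ∑ i ∈ S, |restr x S i| = ∑ i ∈ S, |x i| :=
    Finset.sum_congr rfl fun i hi => by simp [restr, hi]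
  have h2 : ∑ i ∈ Sᶜ, |restr x S i| = 0 :=
    Finset.sum_eq_zero fun i hi => by
      simp only [Finset.mem_compl] at hi; simp [restr, hi]
  rw [h1, h2, add_zero]

lemma restr_add_restr_compl {n : ℕ} (x : Fin n → ℝ) (S : Finset (Fin n)) :
    restr x S + restr x Sᶜ = x := by
  funext i
  by_cases hi : i ∈ S <;> simp [restr, hi]

/-- Sum of the `s` largest magnitudes dominates any other `s`-set sum. -/
lemma sum_abs_le_of_isMaxIdx {n : ℕ} (h : Fin n → ℝ) {s : ℕ} {Th Tx : Finset (Fin n)}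
    (hTh : IsMaxIdx h s Th) (hcard : Tx.card = s) :
    ∑ i ∈ Tx, |h i| ≤ ∑ i ∈ Th, |h i| := by
  obtain ⟨-, hcardTh, hmax⟩ := hTh
  set A := Tx \ Th with hA
  set B := Th \ Tx with hB
  have hAB : A.card = B.card := Finset.card_sdiff_comm (by rw [hcard, hcardTh])
  have key : ∑ i ∈ A, |h i| ≤ ∑ i ∈ B, |h i| := by
    rcases B.eq_empty_or_nonempty with hBe | hBe
    · have : A = ∅ := Finset.card_eq_zero.mp (by rw [hAB, hBe, Finset.card_empty])
      rw [this, hBe]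
    · set c := B.inf' hBe fun i => |h i| with hc
      obtain ⟨i₀, hi₀, hci₀⟩ := Finset.exists_mem_eq_inf' hBe fun i => |h i|
      have hi₀Th : i₀ ∈ Th := (Finset.mem_sdiff.mp hi₀).1
      calc ∑ i ∈ A, |h i| ≤ A.card • c := by
            refine Finset.sum_le_card_nsmul A _ c fun j hj => ?_
            rw [hc, hci₀]
            refine hmax i₀ hi₀Th j ?_
            exact Finset.mem_sdiff.mpr ⟨Finset.mem_univ j, (Finset.mem_sdiff.mp hj).2⟩
        _ = B.card • c := by rw [hAB]
        _ ≤ ∑ i ∈ B, |h i| :=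
            Finset.card_nsmul_le_sum B _ c fun i hi => Finset.inf'_le _ hi
  have e1 : ∑ i ∈ Tx ∩ Th, |h i| + ∑ i ∈ A, |h i| = ∑ i ∈ Tx, |h i| :=
    Finset.sum_inter_add_sum_sdiff Tx Th fun i => |h i|
  have e2 : ∑ i ∈ Th ∩ Tx, |h i| + ∑ i ∈ B, |h i| = ∑ i ∈ Th, |h i| :=
    Finset.sum_inter_add_sum_sdiff Th Tx fun i => |h i|
  rw [← e1, ← e2, Finset.inter_comm]
  linarith


/-- modified cone constraint inequality for `ℓ₁ − αℓ₂`.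
If `0 < α ≤ 1`, `s` is a positive integer with `s ≤ n`, and `x̂` satisfies
`‖x̂‖₁ − α‖x̂‖₂ ≤ ‖x‖₁ − α‖x‖₂`, then with `h = x̂ − x`:
(i)  `‖h₋ₘₐₓ₍ₛ₎‖₁ ≤ ‖hₘₐₓ₍ₛ₎‖₁ + 2‖x₋ₘₐₓ₍ₛ₎‖₁ + α‖h‖₂`, and
(ii) `‖h₋ₘₐₓ₍ₛ₎‖₁ − α‖h₋ₘₐₓ₍ₛ₎‖₂ ≤ ‖hₘₐₓ₍ₛ₎‖₁ + 2‖x₋ₘₐₓ₍ₛ₎‖₁ + α‖hₘₐₓ₍ₛ₎‖₂`.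
Here `hₘₐₓ₍ₛ₎ = restr h Th` and `h₋ₘₐₓ₍ₛ₎ = restr h Thᶜ` for an index set `Th` of the `s`
largest-magnitude entries of `h`, and similarly for `x`. -/
theorem stmt0 {n : ℕ} (α : ℝ) (hα0 : 0 < α) (hα1 : α ≤ 1)
    (s : ℕ) (hs : 0 < s) (hsn : s ≤ n)
    (x xhat : Fin n → ℝ)
    (hmin : l1norm xhat - α * l2norm xhat ≤ l1norm x - α * l2norm x)
    (h : Fin n → ℝ) (hh : h = xhat - x)
    (Th Tx : Finset (Fin n)) (hTh : IsMaxIdx h s Th) (hTx : IsMaxIdx x s Tx) :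
    l1norm (restr h Thᶜ) ≤
        l1norm (restr h Th) + 2 * l1norm (restr x Txᶜ) + α * l2norm h ∧
    l1norm (restr h Thᶜ) - α * l2norm (restr h Thᶜ) ≤
        l1norm (restr h Th) + 2 * l1norm (restr x Txᶜ) + α * l2norm (restr h Th) := by
  -- Step A: ‖x̂‖₁ ≤ ‖x‖₁ + α‖h‖₂
  have hA : l1norm xhat ≤ l1norm x + α * l2norm h := by
    have h2 : l2norm xhat - l2norm x ≤ l2norm h := by
      rw [hh]; exact l2norm_sub_le xhat x
    nlinarith
  -- Step B: split ℓ₁ norm of x̂ over Tx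
  have hxhat : ∀ i, xhat i = x i + h i := by intro i; simp [hh]
  have hB1 : ∑ i ∈ Tx, |x i| - ∑ i ∈ Tx, |h i| ≤ ∑ i ∈ Tx, |xhat i| := by
    rw [← Finset.sum_sub_distrib]
    refine Finset.sum_le_sum fun i _ => ?_
    have h1 := abs_add_le (x i + h i) (-(h i))
    rw [abs_neg, add_neg_cancel_right] at h1
    rw [hxhat i]; linarith
  have hB2 : ∑ i ∈ Txᶜ, |h i| - ∑ i ∈ Txᶜ, |x i| ≤ ∑ i ∈ Txᶜ, |xhat i| := by
    rw [← Finset.sum_sub_distrib]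
    refine Finset.sum_le_sum fun i _ => ?_
    have h1 := abs_add_le (x i + h i) (-(x i))
    rw [abs_neg] at h1
    have h2 : x i + h i + -x i = h i := by ring
    rw [h2] at h1
    rw [hxhat i]; linarith
  have hsplit_xhat : ∑ i ∈ Tx, |xhat i| + ∑ i ∈ Txᶜ, |xhat i| = l1norm xhat :=
    Finset.sum_add_sum_compl Tx fun i => |xhat i|
  have hsplit_x : ∑ i ∈ Tx, |x i| + ∑ i ∈ Txᶜ, |x i| = l1norm x :=
    Finset.sum_add_sum_compl Tx fun i => |x i|
  have hsplit_h : ∑ i ∈ Th, |h i| + ∑ i ∈ Thᶜ, |h i| = l1norm h :=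
    Finset.sum_add_sum_compl Th fun i => |h i|
  have hsplit_hTx : ∑ i ∈ Tx, |h i| + ∑ i ∈ Txᶜ, |h i| = l1norm h :=
    Finset.sum_add_sum_compl Tx fun i => |h i|
  -- cone constraint over Tx
  have hcone : ∑ i ∈ Txᶜ, |h i| ≤
      ∑ i ∈ Tx, |h i| + 2 * (∑ i ∈ Txᶜ, |x i|) + α * l2norm h := by linarith
  -- swap to Th
  have hswap : ∑ i ∈ Tx, |h i| ≤ ∑ i ∈ Th, |h i| :=
    sum_abs_le_of_isMaxIdx h hTh hTx.2.1
  have hi : l1norm (restr h Thᶜ) ≤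
      l1norm (restr h Th) + 2 * l1norm (restr x Txᶜ) + α * l2norm h := by
    rw [l1norm_restr, l1norm_restr, l1norm_restr]
    linarith
  refine ⟨hi, ?_⟩
  have htri : l2norm h ≤ l2norm (restr h Th) + l2norm (restr h Thᶜ) := by
    conv_lhs => rw [← restr_add_restr_compl h Th]
    exact l2norm_add_le _ _
  nlinarith
end

section
/- Let 0 < α ≤ 1 and s be a positive integer with s ≤ n. Suppose x ∈ ℝⁿ is s-sparse (i.e., has at most s nonzero entries) and x̂ ∈ ℝⁿ satisfies ‖x̂‖₁ − α‖x̂‖₂ ≤ ‖x‖₁ − α‖x‖₂. Set h = x̂ − x. Then (i) ‖h_{-max(s)}‖₁ ≤ ‖h_{max(s)}‖₁ + α‖h‖₂, and (ii) ‖h_{-max(s)}‖₁ − α‖h_{-max(s)}‖₂ ≤ ‖h_{max(s)}‖₁ + α‖h_{max(s)}‖₂. -/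
open Finset

lemma l1_restr {n : ℕ} (v : Fin n → ℝ) (S : Finset (Fin n)) :
    l1norm (restr v S) = ∑ i ∈ S, |v i| := by
  unfold l1norm restr
  rw [← Finset.sum_add_sum_compl S]
  have h1 : ∑ i ∈ S, |if i ∈ S then v i else 0| = ∑ i ∈ S, |v i| :=
    Finset.sum_congr rfl fun i hi => by rw [if_pos hi]
  have h2 : ∑ i ∈ Sᶜ, |if i ∈ S then v i else 0| = 0 :=
    Finset.sum_eq_zero fun i hi => by rw [if_neg (Finset.mem_compl.mp hi), abs_zero]
  rw [h1, h2, add_zero]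

lemma l2_eq_norm {n : ℕ} (v : Fin n → ℝ) :
    l2norm v = ‖(WithLp.equiv 2 (Fin n → ℝ)).symm v‖ := by
  rw [EuclideanSpace.norm_eq]
  simp [l2norm, sq_abs]

lemma l2_triangle {n : ℕ} (a b : Fin n → ℝ) : l2norm (a + b) ≤ l2norm a + l2norm b := by
  rw [l2_eq_norm, l2_eq_norm, l2_eq_norm]
  exact norm_add_le _ _

lemma sum_abs_max {n : ℕ} (h : Fin n → ℝ) (Th T : Finset (Fin n))
    (hT : T.card ≤ Th.card)
    (hmax : ∀ i ∈ Th, ∀ j ∈ Finset.univ \ Th, |h j| ≤ |h i|) :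
    ∑ i ∈ T, |h i| ≤ ∑ i ∈ Th, |h i| := by
  rw [← Finset.sum_inter_add_sum_sdiff T Th, ← Finset.sum_inter_add_sum_sdiff Th T,
    Finset.inter_comm Th T]
  have hcard : (T \ Th).card ≤ (Th \ T).card := by
    have h1 := Finset.card_inter_add_card_sdiff T Th
    have h2 := Finset.card_inter_add_card_sdiff Th T
    rw [Finset.inter_comm Th T] at h2
    omega
  have key : ∑ i ∈ T \ Th, |h i| ≤ ∑ i ∈ Th \ T, |h i| := by
    rcases (Th \ T).eq_empty_or_nonempty with he | hne
    · have : (T \ Th).card = 0 := by rw [he] at hcard; simpa using hcard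
      rw [Finset.card_eq_zero] at this
      rw [this, he]
    · obtain ⟨i₀, hi₀, hmin⟩ := Finset.exists_min_image (Th \ T) (fun i => |h i|) hne
      have hi₀Th : i₀ ∈ Th := (Finset.mem_sdiff.mp hi₀).1
      calc ∑ i ∈ T \ Th, |h i| ≤ ∑ _i ∈ T \ Th, |h i₀| := by
            refine Finset.sum_le_sum fun j hj => hmax i₀ hi₀Th j ?_
            simp [Finset.mem_sdiff.mp hj |>.2]
        _ = (T \ Th).card * |h i₀| := by rw [Finset.sum_const, nsmul_eq_mul]
        _ ≤ (Th \ T).card * |h i₀| :=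
            mul_le_mul_of_nonneg_right (by exact_mod_cast hcard) (abs_nonneg _)
        _ ≤ ∑ i ∈ Th \ T, |h i| := by
            rw [← nsmul_eq_mul]
            exact Finset.card_nsmul_le_sum _ _ _ hmin
  linarith

/-- cone constraint inequality for `ℓ₁ − αℓ₂`, sparse case.
If `0 < α ≤ 1`, `s` is a positive integer with `s ≤ n`, `x` is `s`-sparse and `x̂` satisfies
`‖x̂‖₁ − α‖x̂‖₂ ≤ ‖x‖₁ − α‖x‖₂`, then with `h = x̂ − x`:
(i)  `‖h₋ₘₐₓ₍ₛ₎‖₁ ≤ ‖hₘₐₓ₍ₛ₎‖₁ + α‖h‖₂`, and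
(ii) `‖h₋ₘₐₓ₍ₛ₎‖₁ − α‖h₋ₘₐₓ₍ₛ₎‖₂ ≤ ‖hₘₐₓ₍ₛ₎‖₁ + α‖hₘₐₓ₍ₛ₎‖₂`. -/
theorem stmt1 {n : ℕ} (α : ℝ) (hα0 : 0 < α) (hα1 : α ≤ 1)
    (s : ℕ) (hs : 0 < s) (hsn : s ≤ n)
    (x xhat : Fin n → ℝ) (hx : Sparse s x)
    (hmin : l1norm xhat - α * l2norm xhat ≤ l1norm x - α * l2norm x)
    (h : Fin n → ℝ) (hh : h = xhat - x)
    (Th : Finset (Fin n)) (hTh : IsMaxIdx h s Th) :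
    l1norm (restr h Thᶜ) ≤ l1norm (restr h Th) + α * l2norm h ∧
    l1norm (restr h Thᶜ) - α * l2norm (restr h Thᶜ) ≤
        l1norm (restr h Th) + α * l2norm (restr h Th) := by
  obtain ⟨S, hScard, hSsupp⟩ := hx
  obtain ⟨-, hThcard, hThmax⟩ := hTh
  have hxhat : xhat = x + h := by rw [hh]; ring
  -- ℓ₂ triangle : l2norm xhat ≤ l2norm x + l2norm h
  have htri : l2norm xhat ≤ l2norm x + l2norm h := by
    rw [hxhat]; exact l2_triangle x h
  -- l1norm x = ∑_{S} |x i|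
  have hl1x : l1norm x = ∑ i ∈ S, |x i| := by
    unfold l1norm
    rw [← Finset.sum_add_sum_compl S]
    have : ∑ i ∈ Sᶜ, |x i| = 0 :=
      Finset.sum_eq_zero fun i hi => by rw [hSsupp i (Finset.mem_compl.mp hi), abs_zero]
    rw [this, add_zero]
  -- lower bound on l1norm xhat
  have hl1xhat : ∑ i ∈ S, |x i| - ∑ i ∈ S, |h i| + ∑ i ∈ Sᶜ, |h i| ≤ l1norm xhat := by
    unfold l1norm
    rw [← Finset.sum_add_sum_compl S]
    have h1 : ∑ i ∈ S, (|x i| - |h i|) ≤ ∑ i ∈ S, |xhat i| := by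
      refine Finset.sum_le_sum fun i _ => ?_
      have h0 : |x i| - |h i| ≤ |x i + h i| := by
        have := abs_sub_abs_le_abs_sub (x i) (-(h i))
        simpa [sub_neg_eq_add] using this
      rw [hxhat]
      simpa using h0
    have h2 : ∑ i ∈ Sᶜ, |h i| = ∑ i ∈ Sᶜ, |xhat i| := by
      refine Finset.sum_congr rfl fun i hi => ?_
      rw [hxhat]
      simp [hSsupp i (Finset.mem_compl.mp hi)]
    rw [Finset.sum_sub_distrib] at h1
    linarith
  -- cone constraint with support S
  have hcone : ∑ i ∈ Sᶜ, |h i| ≤ ∑ i ∈ S, |h i| + α * l2norm h := by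
    have := hmin
    nlinarith [mul_le_mul_of_nonneg_left htri (le_of_lt hα0)]
  -- maximality : ∑_{S} |h| ≤ ∑_{Th} |h|
  have hmaxS : ∑ i ∈ S, |h i| ≤ ∑ i ∈ Th, |h i| :=
    sum_abs_max h Th S (by rw [hThcard]; exact hScard) hThmax
  -- l1norm h splits
  have hsplit : ∑ i ∈ Th, |h i| + ∑ i ∈ Thᶜ, |h i| = ∑ i ∈ S, |h i| + ∑ i ∈ Sᶜ, |h i| := by
    rw [Finset.sum_add_sum_compl, Finset.sum_add_sum_compl]
  have part1 : l1norm (restr h Thᶜ) ≤ l1norm (restr h Th) + α * l2norm h := by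
    rw [l1_restr, l1_restr]
    linarith
  refine ⟨part1, ?_⟩
  -- part (ii)
  have hdecomp : restr h Th + restr h Thᶜ = h := by
    funext i
    by_cases hi : i ∈ Th <;> simp [restr, hi]
  have htri2 : l2norm h ≤ l2norm (restr h Th) + l2norm (restr h Thᶜ) := by
    conv_lhs => rw [← hdecomp]
    exact l2_triangle _ _
  nlinarith [mul_le_mul_of_nonneg_left htri2 (le_of_lt hα0), l2_triangle (restr h Th) (restr h Thᶜ)]
end

section
/- Let 0 ≤ α ≤ 1 and let x ∈ ℝⁿ be a nonzero vector with support T = supp(x) and exactly s nonzero entries (‖x‖₀ = s). Then (s − α√s)·min_{j ∈ T} |x_j| ≤ ‖x‖₁ − α‖x‖₂ ≤ (√s − α)‖x‖₂. -/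
open Finset

/-- For `0 ≤ α ≤ 1` and a nonzero vector `x ∈ ℝⁿ` with support `T` and exactly
`s` nonzero entries, `(s − α√s)·min_{j ∈ T} |x j| ≤ ‖x‖₁ − α‖x‖₂ ≤ (√s − α)‖x‖₂`. -/
theorem stmt2 {n : ℕ} (α : ℝ) (hα0 : 0 ≤ α) (hα1 : α ≤ 1)
    (x : Fin n → ℝ) (hx : x ≠ 0)
    (T : Finset (Fin n)) (hT : ∀ j, j ∈ T ↔ x j ≠ 0) (hTne : T.Nonempty)
    (s : ℕ) (hs : T.card = s) :
    ((s : ℝ) - α * Real.sqrt s) * T.inf' hTne (fun j => |x j|) ≤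
        l1norm x - α * l2norm x ∧
    l1norm x - α * l2norm x ≤ (Real.sqrt s - α) * l2norm x := by
  set m := T.inf' hTne (fun j => |x j|) with hm_def
  have hm_le : ∀ j ∈ T, m ≤ |x j| := fun j hj => Finset.inf'_le _ hj
  have hm_pos : 0 < m := by
    rw [hm_def, Finset.lt_inf'_iff]
    intro j hj
    exact abs_pos.mpr ((hT j).mp hj)
  have hs1 : 1 ≤ s := by
    rw [← hs]
    exact Finset.card_pos.mpr hTne
  have hsR : (1 : ℝ) ≤ s := by exact_mod_cast hs1
  have hsqs1 : 1 ≤ Real.sqrt s := by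
    rw [show (1:ℝ) = Real.sqrt 1 by simp]
    exact Real.sqrt_le_sqrt hsR
  have hsqs_sq : Real.sqrt s ^ 2 = s := Real.sq_sqrt (by positivity)
  -- sums restrict to T
  have hsum1 : l1norm x = ∑ j ∈ T, |x j| := by
    rw [l1norm]
    refine (Finset.sum_subset (Finset.subset_univ T) ?_).symm
    intro i _ hi
    simp [of_not_not ((not_iff_not.mpr (hT i)).mp hi)]
  have hsum2 : ∑ i, (x i) ^ 2 = ∑ j ∈ T, (x j) ^ 2 := by
    refine (Finset.sum_subset (Finset.subset_univ T) ?_).symm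
    intro i _ hi
    simp [of_not_not ((not_iff_not.mpr (hT i)).mp hi)]
  have hl2_def : l2norm x = Real.sqrt (∑ j ∈ T, (x j) ^ 2) := by
    rw [l2norm, hsum2]
  have habs_sq : ∀ j, (x j) ^ 2 = |x j| ^ 2 := fun j => (sq_abs (x j)).symm
  -- lower bound on l1: s*m ≤ l1
  have hl1_ge : (s : ℝ) * m ≤ l1norm x := by
    rw [hsum1, ← hs]
    calc (T.card : ℝ) * m = ∑ _j ∈ T, m := by rw [Finset.sum_const, nsmul_eq_mul]
    _ ≤ ∑ j ∈ T, |x j| := Finset.sum_le_sum hm_le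
  set A := l1norm x - (s : ℝ) * m with hA_def
  have hA0 : 0 ≤ A := by linarith
  -- lower bound on l2: √s * m ≤ l2
  have hl2_ge : Real.sqrt s * m ≤ l2norm x := by
    rw [hl2_def, show Real.sqrt s * m = Real.sqrt (s * m ^ 2) by
      rw [Real.sqrt_mul (by positivity), Real.sqrt_sq hm_pos.le]]
    apply Real.sqrt_le_sqrt
    rw [← hs]
    calc (T.card : ℝ) * m ^ 2 = ∑ _j ∈ T, m ^ 2 := by rw [Finset.sum_const, nsmul_eq_mul]
    _ ≤ ∑ j ∈ T, (x j) ^ 2 := by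
        refine Finset.sum_le_sum fun j hj => ?_
        rw [habs_sq]
        exact pow_le_pow_left₀ hm_pos.le (hm_le j hj) 2
  -- upper bound on l2: l2 ≤ √s * m + A
  have hl2_le : l2norm x ≤ Real.sqrt s * m + A := by
    have hRHS : 0 ≤ Real.sqrt s * m + A := by positivity
    rw [hl2_def]
    rw [show Real.sqrt s * m + A = Real.sqrt ((Real.sqrt s * m + A) ^ 2) from
      (Real.sqrt_sq hRHS).symm]
    apply Real.sqrt_le_sqrt
    have key : ∑ j ∈ T, (x j) ^ 2 ≤ (s : ℝ) * m ^ 2 + 2 * m * A + A ^ 2 := by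
      have hA_eq : A = ∑ j ∈ T, (|x j| - m) := by
        rw [hA_def, hsum1, Finset.sum_sub_distrib, Finset.sum_const, nsmul_eq_mul, hs]
      have h1 : ∑ j ∈ T, (|x j| - m) ^ 2 ≤ A ^ 2 := by
        rw [hA_eq, sq]
        calc ∑ j ∈ T, (|x j| - m) ^ 2 ≤ ∑ j ∈ T, (|x j| - m) * (∑ k ∈ T, (|x k| - m)) := by
              refine Finset.sum_le_sum fun j hj => ?_
              rw [sq]
              refine mul_le_mul_of_nonneg_left ?_ (by linarith [hm_le j hj])
              exact Finset.single_le_sum (f := fun k => |x k| - m)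
                (fun k hk => by simpa using sub_nonneg.mpr (hm_le k hk)) hj
        _ = (∑ j ∈ T, (|x j| - m)) * (∑ k ∈ T, (|x k| - m)) := by
              rw [← Finset.sum_mul]
      calc ∑ j ∈ T, (x j) ^ 2 = ∑ j ∈ T, ((|x j| - m) ^ 2 + 2 * m * (|x j| - m) + m ^ 2) := by
            refine Finset.sum_congr rfl fun j hj => ?_
            rw [habs_sq]; ring
      _ = (∑ j ∈ T, (|x j| - m) ^ 2) + 2 * m * A + (s : ℝ) * m ^ 2 := by
            rw [Finset.sum_add_distrib, Finset.sum_add_distrib, ← Finset.mul_sum, ← hA_eq,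
              Finset.sum_const, nsmul_eq_mul, hs]
      _ ≤ (s : ℝ) * m ^ 2 + 2 * m * A + A ^ 2 := by linarith
    have hstep : (s : ℝ) * m ^ 2 + 2 * m * A + A ^ 2 ≤ (Real.sqrt s * m + A) ^ 2 := by
      have : 2 * m * A ≤ 2 * (Real.sqrt s * m) * A := by
        nlinarith [mul_nonneg (sub_nonneg.mpr hsqs1) (mul_nonneg hm_pos.le hA0)]
      nlinarith [hsqs_sq]
    linarith
  constructor
  · -- left inequality
    have h1 : l2norm x - Real.sqrt s * m ≤ A := by linarith
    have h2 : 0 ≤ l2norm x - Real.sqrt s * m := by linarith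
    have h3 : α * (l2norm x - Real.sqrt s * m) ≤ A :=
      le_trans (by nlinarith) h1
    rw [hA_def] at h3
    ring_nf
    ring_nf at h3
    linarith
  · -- right: l1 ≤ √s * l2
    have hl1_le : l1norm x ≤ Real.sqrt s * l2norm x := by
      have hcs : (∑ j ∈ T, |x j|) ^ 2 ≤ (T.card : ℝ) * ∑ j ∈ T, |x j| ^ 2 := by
        exact sq_sum_le_card_mul_sum_sq
      have hl1_nonneg : 0 ≤ l1norm x := by
        rw [hsum1]; positivity
      have hl2_nonneg : 0 ≤ l2norm x := Real.sqrt_nonneg _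
      have h2sq : l2norm x ^ 2 = ∑ j ∈ T, (x j) ^ 2 := by
        rw [hl2_def, Real.sq_sqrt (by positivity)]
      have : l1norm x ^ 2 ≤ (Real.sqrt s * l2norm x) ^ 2 := by
        rw [mul_pow, hsqs_sq, hsum1, h2sq]
        calc (∑ j ∈ T, |x j|) ^ 2 ≤ (T.card : ℝ) * ∑ j ∈ T, |x j| ^ 2 := hcs
        _ = (s : ℝ) * ∑ j ∈ T, (x j) ^ 2 := by
            rw [hs]; congr 1; exact Finset.sum_congr rfl fun j _ => (habs_sq j).symm
      nlinarith [mul_nonneg (Real.sqrt_nonneg (s:ℝ)) hl2_nonneg]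
    linarith
end

section
/- Let 0 < α ≤ 1, let s and t be positive integers, let h ∈ ℝⁿ, and let T₀ be the index set of the s largest-magnitude entries of h. Partition T₀ᶜ = T₁ ∪ T₂ ∪ ... ∪ T_J, where T₁ is the index set of the t largest-magnitude entries of h restricted to T₀ᶜ, T₂ is the index set of the next t largest-magnitude entries, and so on (the last block T_J may contain fewer than t elements). Then Σ_{j=2}^{J} ‖h_{T_j}‖₂ ≤ (‖h_{T₀ᶜ}‖₁ − α‖h_{T₀ᶜ}‖₂)/(√t − α), where h_S denotes the vector equal to h on the index set S and zero elsewhere. -/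
open Finset

lemma sum_sq_le_sq_sum' {ι : Type*} (s : Finset ι) (u : ι → ℝ) (hu : ∀ i ∈ s, 0 ≤ u i) :
    ∑ i ∈ s, u i ^ 2 ≤ (∑ i ∈ s, u i) ^ 2 := by
  calc ∑ i ∈ s, u i ^ 2 ≤ ∑ i ∈ s, u i * (∑ j ∈ s, u j) := by
        refine Finset.sum_le_sum fun i hi => ?_
        rw [sq]
        exact mul_le_mul_of_nonneg_left (Finset.single_le_sum hu hi) (hu i hi)
    _ = (∑ i ∈ s, u i) ^ 2 := by rw [← Finset.sum_mul, sq]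

lemma sqrt_sum_sq_le_sum_abs' {ι : Type*} (s : Finset ι) (x : ι → ℝ) :
    Real.sqrt (∑ i ∈ s, x i ^ 2) ≤ ∑ i ∈ s, |x i| := by
  have h1 : ∑ i ∈ s, x i ^ 2 ≤ (∑ i ∈ s, |x i|) ^ 2 := by
    have := sum_sq_le_sq_sum' s (fun i => |x i|) (fun i _ => abs_nonneg _)
    simpa [sq_abs] using this
  calc Real.sqrt (∑ i ∈ s, x i ^ 2) ≤ Real.sqrt ((∑ i ∈ s, |x i|) ^ 2) := Real.sqrt_le_sqrt h1
    _ = ∑ i ∈ s, |x i| := Real.sqrt_sq (Finset.sum_nonneg fun i _ => abs_nonneg _)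

lemma sqrt_sum_le_sum_sqrt' {ι : Type*} (s : Finset ι) (x : ι → ℝ) (hx : ∀ i ∈ s, 0 ≤ x i) :
    Real.sqrt (∑ i ∈ s, x i) ≤ ∑ i ∈ s, Real.sqrt (x i) := by
  have h1 : ∑ i ∈ s, x i ≤ (∑ i ∈ s, Real.sqrt (x i)) ^ 2 := by
    have h2 := sum_sq_le_sq_sum' s (fun i => Real.sqrt (x i)) (fun i _ => Real.sqrt_nonneg _)
    calc ∑ i ∈ s, x i = ∑ i ∈ s, Real.sqrt (x i) ^ 2 :=
          Finset.sum_congr rfl fun i hi => (Real.sq_sqrt (hx i hi)).symm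
      _ ≤ _ := h2
  calc Real.sqrt (∑ i ∈ s, x i) ≤ Real.sqrt ((∑ i ∈ s, Real.sqrt (x i)) ^ 2) :=
        Real.sqrt_le_sqrt h1
    _ = ∑ i ∈ s, Real.sqrt (x i) :=
        Real.sqrt_sq (Finset.sum_nonneg fun i _ => Real.sqrt_nonneg _)

/-- Let `0 < α ≤ 1`, `s, t` be positive integers (with `√t > α`, so that the
right-hand side is meaningful), let `T₀` be the index set of the `s` largest-magnitude entries
of `h`, and partition `T₀ᶜ = T₁ ∪ ⋯ ∪ T_J` into consecutive blocks of `t` largest remaining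
entries (the last block possibly smaller).  Then
`Σ_{j=2}^{J} ‖h_{T_j}‖₂ ≤ (‖h_{T₀ᶜ}‖₁ − α‖h_{T₀ᶜ}‖₂)/(√t − α)`. -/
theorem stmt3 {n : ℕ} (α : ℝ) (hα0 : 0 < α) (hα1 : α ≤ 1)
    (s t : ℕ) (hs : 0 < s) (ht : 0 < t) (hαt : α < Real.sqrt t)
    (h : Fin n → ℝ) (T0 : Finset (Fin n)) (hT0 : IsMaxIdx h s T0)
    (J : ℕ) (hJ : 1 ≤ J) (T : ℕ → Finset (Fin n))
    (hdisj : ∀ i ∈ Finset.Icc 1 J, ∀ j ∈ Finset.Icc 1 J, i ≠ j → Disjoint (T i) (T j))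
    (hunion : (Finset.Icc 1 J).biUnion T = T0ᶜ)
    (hcard : ∀ j, 1 ≤ j → j < J → (T j).card = t)
    (hcardJ : (T J).card ≤ t)
    (hsorted : ∀ j, 1 ≤ j → j < J → ∀ i ∈ T (j + 1), ∀ i' ∈ T j, |h i| ≤ |h i'|) :
    ∑ j ∈ Finset.Icc 2 J, l2norm (restr h (T j)) ≤
      (l1norm (restr h T0ᶜ) - α * l2norm (restr h T0ᶜ)) / (Real.sqrt t - α) := by
  have hl2 : ∀ S : Finset (Fin n), l2norm (restr h S) = Real.sqrt (∑ i ∈ S, h i ^ 2) := by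
    intro S; simp [l2norm, restr, ite_pow, Finset.sum_ite_mem]
  have hl1 : ∀ S : Finset (Fin n), l1norm (restr h S) = ∑ i ∈ S, |h i| := by
    intro S; simp [l1norm, restr, apply_ite abs, Finset.sum_ite_mem]
  set f : ℕ → ℝ := fun j => ∑ i ∈ T j, |h i| with hf
  set g : ℕ → ℝ := fun j => Real.sqrt (∑ i ∈ T j, h i ^ 2) with hg
  have hg0 : ∀ j, 0 ≤ g j := fun j => Real.sqrt_nonneg _
  have hgf : ∀ j, g j ≤ f j := fun j => sqrt_sum_sq_le_sum_abs' (T j) h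
  have hst : Real.sqrt t ^ 2 = (t : ℝ) := Real.sq_sqrt (Nat.cast_nonneg t)
  have hst1 : (1 : ℝ) ≤ Real.sqrt t := by
    rw [show (1:ℝ) = Real.sqrt 1 from (Real.sqrt_one).symm]
    exact Real.sqrt_le_sqrt (by exact_mod_cast ht)
  have htα : (0 : ℝ) < Real.sqrt t - α := sub_pos.mpr hαt
  -- per-block key inequality
  have key : ∀ k, 1 ≤ k → k < J → (Real.sqrt t - α) * g (k + 1) ≤ f k - α * g k := by
    intro k hk1 hkJ
    have hcardk : (T k).card = t := hcard k hk1 hkJ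
    have hne : (T k).Nonempty := Finset.card_pos.mp (by rw [hcardk]; exact ht)
    obtain ⟨i₀, hi₀, hmin⟩ := Finset.exists_min_image (T k) (fun i => |h i|) hne
    set m := |h i₀| with hm
    have hm0 : 0 ≤ m := abs_nonneg _
    -- card of next block
    have hcardk1 : (T (k + 1)).card ≤ t := by
      rcases eq_or_lt_of_le (Nat.succ_le_of_lt hkJ) with hEq | hLt
      · have hkk : k + 1 = J := hEq
        rw [hkk]; exact hcardJ
      · exact le_of_eq (hcard (k + 1) (by omega) hLt)
    -- bound on g (k+1)
    have hgk1 : g (k + 1) ≤ Real.sqrt t * m := by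
      have hb : ∑ i ∈ T (k + 1), h i ^ 2 ≤ (t : ℝ) * m ^ 2 := by
        calc ∑ i ∈ T (k + 1), h i ^ 2 ≤ ∑ _i ∈ T (k + 1), m ^ 2 := by
              refine Finset.sum_le_sum fun i hi => ?_
              rw [← sq_abs (h i)]
              exact pow_le_pow_left₀ (abs_nonneg _) (hsorted k hk1 hkJ i hi i₀ hi₀) 2
          _ = ((T (k + 1)).card : ℝ) * m ^ 2 := by rw [Finset.sum_const, nsmul_eq_mul]
          _ ≤ (t : ℝ) * m ^ 2 :=
              mul_le_mul_of_nonneg_right (by exact_mod_cast hcardk1) (sq_nonneg m)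
      calc g (k + 1) ≤ Real.sqrt ((t : ℝ) * m ^ 2) := Real.sqrt_le_sqrt hb
        _ = Real.sqrt t * m := by
            rw [Real.sqrt_mul (Nat.cast_nonneg t), Real.sqrt_sq hm0]
    -- lower bound on f k
    have hfk : (t : ℝ) * m ≤ f k := by
      calc (t : ℝ) * m = ((T k).card : ℝ) * m := by rw [hcardk]
        _ = ∑ _i ∈ T k, m := by rw [Finset.sum_const, nsmul_eq_mul]
        _ ≤ f k := Finset.sum_le_sum fun i hi => hmin i hi
    -- upper bound on g k
    have hgk : g k ≤ Real.sqrt t * m + (f k - (t : ℝ) * m) := by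
      set D := ∑ i ∈ T k, (|h i| - m) with hD
      have hd : ∀ i ∈ T k, 0 ≤ |h i| - m := fun i hi => sub_nonneg.mpr (hmin i hi)
      have hD0 : 0 ≤ D := Finset.sum_nonneg hd
      have hDeq : D = f k - (t : ℝ) * m := by
        rw [hD, Finset.sum_sub_distrib, Finset.sum_const, hcardk, nsmul_eq_mul]
      have h1 : ∑ i ∈ T k, (|h i| - m) ^ 2 ≤ D ^ 2 := sum_sq_le_sq_sum' _ _ hd
      have hsum : ∑ i ∈ T k, h i ^ 2
          = (t : ℝ) * m ^ 2 + 2 * m * D + ∑ i ∈ T k, (|h i| - m) ^ 2 := by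
        have hexp : ∑ i ∈ T k, h i ^ 2
            = ∑ i ∈ T k, (m ^ 2 + 2 * m * (|h i| - m) + (|h i| - m) ^ 2) := by
          refine Finset.sum_congr rfl fun i _ => ?_
          rw [← sq_abs (h i)]; ring
        rw [hexp, Finset.sum_add_distrib, Finset.sum_add_distrib, Finset.sum_const,
          hcardk, nsmul_eq_mul, hD, ← Finset.mul_sum]
      have hsq : ∑ i ∈ T k, h i ^ 2 ≤ (Real.sqrt t * m + D) ^ 2 := by
        nlinarith [mul_nonneg hm0 hD0, hst1, h1, hsum]
      calc g k ≤ Real.sqrt ((Real.sqrt t * m + D) ^ 2) := Real.sqrt_le_sqrt hsq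
        _ = Real.sqrt t * m + D := Real.sqrt_sq
            (by positivity)
        _ = Real.sqrt t * m + (f k - (t : ℝ) * m) := by rw [hDeq]
    nlinarith [mul_le_mul_of_nonneg_left hgk hα0.le,
      mul_le_mul_of_nonneg_left hgk1 htα.le,
      mul_nonneg (sub_nonneg.mpr hα1) (sub_nonneg.mpr hfk), hst]
  -- rewrite goal
  simp only [hl2, hl1]
  rw [le_div_iff₀ htα]
  -- reindex LHS
  have hreindex : ∑ j ∈ Finset.Icc 2 J, g j = ∑ j ∈ Finset.Icc 1 (J - 1), g (j + 1) := by
    have hmap : Finset.map (addRightEmbedding 1) (Finset.Icc 1 (J - 1)) = Finset.Icc 2 J := by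
      rw [Finset.map_add_right_Icc]
      congr 1
      omega
    rw [← hmap, Finset.sum_map]
    rfl
  have hch : (∑ j ∈ Finset.Icc 2 J, g j) * (Real.sqrt t - α)
      ≤ ∑ j ∈ Finset.Icc 1 J, (f j - α * g j) := by
    calc (∑ j ∈ Finset.Icc 2 J, g j) * (Real.sqrt t - α)
        = ∑ j ∈ Finset.Icc 1 (J - 1), (Real.sqrt t - α) * g (j + 1) := by
          rw [hreindex, Finset.sum_mul]
          exact Finset.sum_congr rfl fun j _ => mul_comm _ _
      _ ≤ ∑ j ∈ Finset.Icc 1 (J - 1), (f j - α * g j) := by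
          refine Finset.sum_le_sum fun j hj => ?_
          rw [Finset.mem_Icc] at hj
          exact key j hj.1 (by omega)
      _ ≤ ∑ j ∈ Finset.Icc 1 J, (f j - α * g j) := by
          refine Finset.sum_le_sum_of_subset_of_nonneg
            (Finset.Icc_subset_Icc_right (by omega)) fun j _ _ => ?_
          have := hgf j
          nlinarith [hg0 j]
  -- relate the total sums to T0ᶜ
  have hpd : (↑(Finset.Icc 1 J) : Set ℕ).PairwiseDisjoint T := by
    intro i hi j hj hij
    exact hdisj i (Finset.mem_coe.mp hi) j (Finset.mem_coe.mp hj) hij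
  have hF : ∑ j ∈ Finset.Icc 1 J, f j = ∑ i ∈ T0ᶜ, |h i| := by
    rw [← hunion, Finset.sum_biUnion hpd]
  have hG : Real.sqrt (∑ i ∈ T0ᶜ, h i ^ 2) ≤ ∑ j ∈ Finset.Icc 1 J, g j := by
    rw [← hunion, Finset.sum_biUnion hpd]
    exact sqrt_sum_le_sum_sqrt' _ _ fun j _ => Finset.sum_nonneg fun i _ => sq_nonneg _
  have hsplit : ∑ j ∈ Finset.Icc 1 J, (f j - α * g j)
      = ∑ j ∈ Finset.Icc 1 J, f j - α * ∑ j ∈ Finset.Icc 1 J, g j := by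
    rw [Finset.sum_sub_distrib, Finset.mul_sum]
  have halpha : α * Real.sqrt (∑ i ∈ T0ᶜ, h i ^ 2) ≤ α * ∑ j ∈ Finset.Icc 1 J, g j :=
    mul_le_mul_of_nonneg_left hG hα0.le
  linarith [hch, hsplit ▸ hch]
end

section
/- Let h ∈ ℝⁿ, let s and t be positive integers with s + t ≤ n, let T₀ be the index set of the s largest-magnitude entries of h, and let T₀₁ be the index set of the s + t largest-magnitude entries of h (so T₀ ⊆ T₀₁). Then ‖h_{T₀₁ᶜ}‖₂ ≤ ‖h_{T₀ᶜ}‖₁/(2√t), where h_S denotes the vector equal to h on the index set S and zero elsewhere. -/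
open Finset

/-- Let `h ∈ ℝⁿ`, `s, t` positive integers with `s + t ≤ n`, `T₀` an index
set of the `s` largest-magnitude entries of `h`, and `T₀₁ ⊇ T₀` an index set of the `s + t`
largest-magnitude entries of `h`.  Then `‖h_{T₀₁ᶜ}‖₂ ≤ ‖h_{T₀ᶜ}‖₁/(2√t)`. -/
theorem stmt12 {n : ℕ} (h : Fin n → ℝ) (s t : ℕ) (hs : 0 < s) (ht : 0 < t)
    (hstn : s + t ≤ n)
    (T0 T01 : Finset (Fin n)) (hT0 : IsMaxIdx h s T0) (hT01 : IsMaxIdx h (s + t) T01)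
    (hsub : T0 ⊆ T01) :
    l2norm (restr h T01ᶜ) ≤ l1norm (restr h T0ᶜ) / (2 * Real.sqrt t) := by
  obtain ⟨-, hc01, hmax⟩ := hT01
  obtain ⟨-, hc0, -⟩ := hT0
  set T1 := T01 \ T0 with hT1def
  have hcT1 : T1.card = t := by
    rw [hT1def, Finset.card_sdiff_of_subset hsub, hc01, hc0]; omega
  have hne : T1.Nonempty := Finset.card_pos.mp (by omega)
  set α := T1.inf' hne (fun j => |h j|) with hα
  -- every entry outside T01 has magnitude ≤ α
  have hout : ∀ i ∈ T01ᶜ, |h i| ≤ α := by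
    intro i hi
    rw [hα, Finset.le_inf'_iff]
    intro j hj
    exact hmax j (Finset.sdiff_subset hj) i (by simpa using hi)
  set A := ∑ j ∈ T1, |h j| with hA
  set B := ∑ i ∈ T01ᶜ, |h i| with hB
  have hAnn : 0 ≤ A := Finset.sum_nonneg fun _ _ => abs_nonneg _
  have hBnn : 0 ≤ B := Finset.sum_nonneg fun _ _ => abs_nonneg _
  have htα : (t : ℝ) * α ≤ A := by
    calc (t : ℝ) * α = ∑ _j ∈ T1, α := by rw [Finset.sum_const, hcT1]; ring
    _ ≤ A := Finset.sum_le_sum fun j hj => Finset.inf'_le _ hj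
  have hsq : ∑ i ∈ T01ᶜ, (h i) ^ 2 ≤ α * B := by
    rw [hB, Finset.mul_sum]
    refine Finset.sum_le_sum fun i hi => ?_
    have := hout i hi
    nlinarith [abs_nonneg (h i), sq_abs (h i)]
  have htpos : (0:ℝ) < t := Nat.cast_pos.mpr ht
  have hkey : ∑ i ∈ T01ᶜ, (h i) ^ 2 ≤ (A + B)^2 / (4 * t) := by
    have hαB : α * B ≤ A / t * B := by
      have : α ≤ A / t := (le_div_iff₀ htpos).mpr (by linarith [htα])
      exact mul_le_mul_of_nonneg_right this hBnn
    have h2 : A / t * B ≤ (A + B)^2 / (4 * t) := by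
      rw [div_mul_eq_mul_div, div_le_div_iff₀ htpos (by positivity)]
      nlinarith [sq_nonneg (A - B)]
    linarith [hsq]
  -- l1 norm equals A + B
  have hl1 : l1norm (restr h T0ᶜ) = A + B := by
    have hsplit : T0ᶜ = T1 ∪ T01ᶜ := by
      ext i
      simp only [Finset.mem_compl, hT1def, Finset.mem_union, Finset.mem_sdiff]
      constructor
      · intro hi
        by_cases h01 : i ∈ T01
        · exact Or.inl ⟨h01, hi⟩
        · exact Or.inr h01
      · rintro (⟨-, hi⟩ | hi)
        · exact hi
        · exact fun hc => hi (hsub hc)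
    have hdisj : Disjoint T1 T01ᶜ :=
      Finset.disjoint_left.mpr fun i hi hic => (Finset.mem_compl.mp hic) (Finset.sdiff_subset hi)
    rw [l1norm]
    calc ∑ i, |restr h T0ᶜ i| = ∑ i ∈ T0ᶜ, |h i| := by
          rw [← Finset.sum_subset (Finset.subset_univ T0ᶜ)]
          · exact Finset.sum_congr rfl fun i hi => by simp [restr, hi]
          · intro i _ hi; simp [restr, hi]
      _ = A + B := by rw [hsplit, Finset.sum_union hdisj]
  -- l2 norm
  have hl2 : l2norm (restr h T01ᶜ) = Real.sqrt (∑ i ∈ T01ᶜ, (h i) ^ 2) := by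
    rw [l2norm]
    congr 1
    rw [← Finset.sum_subset (Finset.subset_univ T01ᶜ)]
    · exact Finset.sum_congr rfl fun i hi => by simp [restr, hi]
    · intro i _ hi; simp [restr, hi]
  rw [hl1, hl2]
  calc Real.sqrt (∑ i ∈ T01ᶜ, (h i) ^ 2) ≤ Real.sqrt ((A + B)^2 / (4 * t)) :=
        Real.sqrt_le_sqrt hkey
    _ = Real.sqrt (((A + B) / (2 * Real.sqrt t))^2) := by
        congr 1
        rw [div_pow, mul_pow, Real.sq_sqrt htpos.le]
        norm_num
    _ = (A + B) / (2 * Real.sqrt t) := Real.sqrt_sq (by positivity)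
end

section
/- For any matrix A ∈ ℝ^{m×n} and any vector h ∈ ℝⁿ, one has ‖Ah‖₁ ≤ √(m · ‖AᵀAh‖_∞ · ‖h‖₁), where Aᵀ denotes the transpose of A. In particular, if ‖AᵀAh‖_∞ ≤ 2η₂ then ‖Ah‖₁ ≤ √(2m·η₂·‖h‖₁). -/
open Matrix

/-- The ℓ∞ norm of a vector in `ℝⁿ` (the sup norm, which is the default norm on `Fin n → ℝ`). -/
noncomputable def linfnorm {n : ℕ} (x : Fin n → ℝ) : ℝ := ‖x‖

/-- For any matrix `A ∈ ℝ^{m×n}` and any `h ∈ ℝⁿ`,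
`‖Ah‖₁ ≤ √(m·‖AᵀAh‖∞·‖h‖₁)`; in particular, if `‖AᵀAh‖∞ ≤ 2η₂` then
`‖Ah‖₁ ≤ √(2m·η₂·‖h‖₁)`. -/
theorem stmt14 {m n : ℕ} (A : Matrix (Fin m) (Fin n) ℝ) (h : Fin n → ℝ) (η₂ : ℝ) :
    l1norm (A.mulVec h) ≤
      Real.sqrt (m * linfnorm (A.transpose.mulVec (A.mulVec h)) * l1norm h) ∧
    (linfnorm (A.transpose.mulVec (A.mulVec h)) ≤ 2 * η₂ →
      l1norm (A.mulVec h) ≤ Real.sqrt (2 * m * η₂ * l1norm h)) := by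
  set v := A.mulVec h with hv
  set w := A.transpose.mulVec v with hw
  have h1nonneg : 0 ≤ l1norm h := Finset.sum_nonneg fun i _ => abs_nonneg _
  have hvnonneg : 0 ≤ l1norm v := Finset.sum_nonneg fun i _ => abs_nonneg _
  -- inner product identity: ∑ v i ^2 = h ⬝ᵥ w
  have key : ∑ i, v i ^ 2 = h ⬝ᵥ w := by
    have : v ⬝ᵥ v = h ⬝ᵥ w := by
      calc v ⬝ᵥ v = v ⬝ᵥ (A *ᵥ h) := by rw [← hv]
        _ = (v ᵥ* A) ⬝ᵥ h := Matrix.dotProduct_mulVec _ _ _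
        _ = h ⬝ᵥ (v ᵥ* A) := dotProduct_comm _ _
        _ = h ⬝ᵥ w := by rw [hw, Matrix.mulVec_transpose]
    simpa [dotProduct, sq] using this
  have hbound : ∑ i, v i ^ 2 ≤ linfnorm w * l1norm h := by
    rw [key]
    calc h ⬝ᵥ w ≤ ∑ i, |h i * w i| := Finset.sum_le_sum fun i _ => le_abs_self _
      _ ≤ ∑ i, |h i| * linfnorm w := by
          refine Finset.sum_le_sum fun i _ => ?_
          rw [abs_mul]
          exact mul_le_mul_of_nonneg_left (norm_le_pi_norm w i) (abs_nonneg _)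
      _ = linfnorm w * l1norm h := by
          rw [l1norm, Finset.mul_sum]
          exact Finset.sum_congr rfl fun i _ => mul_comm _ _
  have cs : (l1norm v) ^ 2 ≤ m * ∑ i, v i ^ 2 := by
    simpa [l1norm, sq_abs] using sq_sum_le_card_mul_sum_sq (s := Finset.univ) (f := fun i => |v i|)
  have main : l1norm v ≤ Real.sqrt (m * linfnorm w * l1norm h) := by
    have hwnn : (0:ℝ) ≤ linfnorm w := norm_nonneg w
    rw [Real.le_sqrt hvnonneg (mul_nonneg (mul_nonneg (Nat.cast_nonneg m) hwnn) h1nonneg)]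
    calc (l1norm v) ^ 2 ≤ m * ∑ i, v i ^ 2 := cs
      _ ≤ m * (linfnorm w * l1norm h) := by
          exact mul_le_mul_of_nonneg_left hbound (Nat.cast_nonneg m)
      _ = m * linfnorm w * l1norm h := by ring
  refine ⟨main, fun hle => main.trans (Real.sqrt_le_sqrt ?_)⟩
  have : (m : ℝ) * linfnorm w ≤ m * (2 * η₂) :=
    mul_le_mul_of_nonneg_left hle (Nat.cast_nonneg m)
  calc (m : ℝ) * linfnorm w * l1norm h ≤ m * (2 * η₂) * l1norm h :=
        mul_le_mul_of_nonneg_right this h1nonneg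
    _ = 2 * m * η₂ * l1norm h := by ring
end
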